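/- Let {θ_j} be dense in [0,2π] and a_j := (1+1/j)e^{iθ_j}. Let U ⊂ ℂ be an open neighborhood of 𝔻̄ and let v be a C¹-smooth subharmonic function on U. If v(a_j) = 1 for every j with a_j ∈ U, then v ≡ 1 on the closed unit disc 𝔻̄. -/

import Mathlib

/-!
The points `a_j` accumulate at every point of the unit circle, so `v = 1` there by continuity,
and `v ≤ 1` on the closed disc by the maximum principle. If `v = 1` at an interior point, the
strong maximum principle spreads this over the disc. Otherwise `v < 1` inside, and Hopf's barrier
`v - ε log ‖z‖` on the annulus `1/2 < ‖z‖ < 1` makes the radial derivative of `v` at `1` at least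
`ε > 0`. But `v` equals `1` at both ends of the radial chords `[exp (i θ_j), a_j]`, which shrink to
`1` along a subsequence; since `v` is `C¹`, its derivative is strict, so the radial derivative at
`1` vanishes.
-/

open Complex Metric MeasureTheory Real Set

/-- The average of `f` over the circle of radius `r` centered at `z`. -/
noncomputable def cAvg (f : ℂ → ℝ) (z : ℂ) (r : ℝ) : ℝ :=
  (2 * Real.pi)⁻¹ * ∫ θ in (0:ℝ)..(2 * Real.pi), f (z + (r : ℂ) * Complex.exp (θ * Complex.I))

/-- Sub-mean value property of `f` at `z` with respect to circles whose closed discs lie in `U`. -/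
def SubmeanAt (f : ℂ → ℝ) (U : Set ℂ) (z : ℂ) : Prop :=
  ∀ r : ℝ, 0 < r → closedBall z r ⊆ U → f z ≤ cAvg f z r

/-- A real-valued function is subharmonic on `U` if it is upper semicontinuous on `U` and
satisfies the sub-mean value inequality there. -/
def SubharmonicOn (f : ℂ → ℝ) (U : Set ℂ) : Prop :=
  UpperSemicontinuousOn f U ∧ ∀ z ∈ U, SubmeanAt f U z

/-- A `[-∞,∞)`-valued function is subharmonic on `U` if it is upper semicontinuous on `U`,
nowhere `+∞`, not identically `-∞`, and all of its truncations `max (f ·) (-n)` satisfy the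
sub-mean value inequality on `U`. -/
def SubharmonicOnE (f : ℂ → EReal) (U : Set ℂ) : Prop :=
  UpperSemicontinuousOn f U ∧ (∀ z ∈ U, f z < ⊤) ∧ (∃ z ∈ U, f z ≠ ⊥) ∧
  ∀ n : ℕ, ∀ z ∈ U, SubmeanAt (fun w => (max (f w) ((-(n:ℝ) : ℝ) : EReal)).toReal) U z

/-- A real-valued function on a complex normed space is plurisubharmonic on `U` if it is upper
semicontinuous on `U` and satisfies the sub-mean value inequality along every complex line. -/
def PshOn {E : Type*} [NormedAddCommGroup E] [NormedSpace ℂ E]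
    (f : E → ℝ) (U : Set E) : Prop :=
  UpperSemicontinuousOn f U ∧
  ∀ z ∈ U, ∀ v : E, ∀ r : ℝ, 0 < r → (∀ t : ℂ, ‖t‖ ≤ r → z + t • v ∈ U) →
    f z ≤ (2 * Real.pi)⁻¹ *
      ∫ θ in (0:ℝ)..(2 * Real.pi), f (z + ((r : ℂ) * Complex.exp (θ * Complex.I)) • v)

/-- Strict plurisubharmonicity on `U` (in the sense of Harz–Shcherbina–Tomassini): every small
perturbation by a smooth compactly supported function stays plurisubharmonic. -/
def StrictPshOn {E : Type*} [NormedAddCommGroup E] [NormedSpace ℝ E] [NormedSpace ℂ E]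
    (f : E → ℝ) (U : Set E) : Prop :=
  ∀ g : E → ℝ, ContDiff ℝ (⊤ : ℕ∞) g → HasCompactSupport g → tsupport g ⊆ U →
    ∃ ε₀ : ℝ, 0 < ε₀ ∧ ∀ ε : ℝ, |ε| < ε₀ → PshOn (fun z => f z + ε * g z) U

/-- `f` is strictly plurisubharmonic near `z`. -/
def StrictPshNear {E : Type*} [NormedAddCommGroup E] [NormedSpace ℝ E] [NormedSpace ℂ E]
    (f : E → ℝ) (z : E) : Prop :=
  ∃ V : Set E, IsOpen V ∧ z ∈ V ∧ StrictPshOn f V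

/-- The core of `Ω` with respect to `C^k`-smooth plurisubharmonic functions that are bounded
from above. -/
def pshCore {E : Type*} [NormedAddCommGroup E] [NormedSpace ℝ E] [NormedSpace ℂ E]
    (k : ℕ∞) (Ω : Set E) : Set E :=
  {z ∈ Ω | ∀ f : E → ℝ, PshOn f Ω → ContDiffOn ℝ k f Ω →
     (∃ M : ℝ, ∀ w ∈ Ω, f w ≤ M) → ¬ StrictPshNear f z}

/-- `Ω` is pseudoconvex: it is open and admits a plurisubharmonic exhaustion function. -/
def Pseudoconvex {E : Type*} [NormedAddCommGroup E] [NormedSpace ℂ E] (Ω : Set E) : Prop :=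
  IsOpen Ω ∧ ∃ f : E → ℝ, PshOn f Ω ∧
    ∀ c : ℝ, ∃ K : Set E, IsCompact K ∧ K ⊆ Ω ∧ {z ∈ Ω | f z ≤ c} ⊆ K

/-- The Levi form (complex Hessian) of `S` at `z` in direction `ξ`, computed as one quarter of
the Laplacian at `t = 0` of `t ↦ S (z + t • ξ)`. -/
noncomputable def leviForm {E : Type*} [NormedAddCommGroup E] [NormedSpace ℂ E]
    (S : E → ℝ) (z ξ : E) : ℝ :=
  (1/4) * (deriv (fun x : ℝ => deriv (fun x' : ℝ => S (z + ((x' : ℂ)) • ξ)) x) 0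
    + deriv (fun y : ℝ => deriv (fun y' : ℝ => S (z + ((y' : ℂ) * Complex.I) • ξ)) y) 0)

open Asymptotics Filter Topology

lemma cAvg_eq_circleAverage (f : ℂ → ℝ) (z : ℂ) (r : ℝ) : cAvg f z r = circleAverage f z r := rfl

lemma circleAverage_log_norm {c : ℂ} {R : ℝ} (hR : 0 < R) (hRc : R ≤ ‖c‖) :
    circleAverage (fun z ↦ Real.log ‖z‖) c R = Real.log ‖c‖ := by
  have h := circleAverage_log_norm_sub_const_eq_log_radius_add_posLog (a := 0) (c := c) hR.ne'
  simp only [sub_zero] at h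
  rw [h, posLog_eq_log, log_mul (inv_ne_zero hR.ne') (hR.trans_le hRc).ne', Real.log_inv]
  · ring
  · rw [abs_of_nonneg (by positivity)]
    exact (one_le_inv_mul₀ hR).2 hRc

namespace SubmeanAt

variable {f : ℂ → ℝ} {U V : Set ℂ} {z : ℂ}

lemma mono (hf : SubmeanAt f U z) (hVU : V ⊆ U) : SubmeanAt f V z :=
  fun r hr hball ↦ hf r hr (hball.trans hVU)

lemma sub_mul_log_norm (hf : SubmeanAt f U z) (hfc : ContinuousOn f U) (h0 : (0 : ℂ) ∉ U)
    (ε : ℝ) : SubmeanAt (fun w ↦ f w - ε * Real.log ‖w‖) U z := by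
  intro r hr hball
  have hrz : r < ‖z‖ := by
    by_contra! h
    exact h0 (hball (by simpa [dist_comm] using h))
  have hf_int : CircleIntegrable f z r :=
    (hfc.mono (sphere_subset_closedBall.trans hball)).circleIntegrable hr.le
  have hlog_int : CircleIntegrable (fun w ↦ ε * Real.log ‖w‖) z r := by
    refine ContinuousOn.circleIntegrable hr.le (continuousOn_const.mul ?_)
    refine continuous_norm.continuousOn.log fun w hw ↦ norm_ne_zero_iff.2 ?_
    rintro rfl
    exact h0 (hball (sphere_subset_closedBall hw))
  rw [cAvg_eq_circleAverage, circleAverage_fun_sub hf_int hlog_int]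
  simp only [← smul_eq_mul (a := ε), circleAverage_fun_smul, circleAverage_log_norm hr hrz.le]
  exact sub_le_sub_right (hf r hr hball) _

end SubmeanAt

lemma eqOn_sphere_of_le_circleAverage {f : ℂ → ℝ} {c : ℂ} {R M : ℝ}
    (hf : ContinuousOn f (sphere c |R|)) (hle : ∀ x ∈ sphere c |R|, f x ≤ M)
    (havg : M ≤ circleAverage f c R) : ∀ x ∈ sphere c |R|, f x = M := by
  intro x hx
  by_contra hne
  rw [← image_circleMap_Ioc] at hx
  obtain ⟨θ₀, hθ₀, rfl⟩ := hx
  have hcont : ContinuousOn (fun θ ↦ f (circleMap c R θ)) (Icc 0 (2 * π)) :=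
    (hf.comp_continuous (continuous_circleMap c R) (circleMap_mem_sphere' c R)).continuousOn
  have hlt : (∫ θ in (0)..2 * π, f (circleMap c R θ)) < ∫ _ in (0)..2 * π, M :=
    intervalIntegral.integral_lt_integral_of_continuousOn_of_le_of_exists_lt two_pi_pos hcont
      continuousOn_const (fun θ _ ↦ hle _ (circleMap_mem_sphere' c R θ))
      ⟨θ₀, Ioc_subset_Icc_self hθ₀, (hle _ (circleMap_mem_sphere' c R θ₀)).lt_of_ne hne⟩
  have : circleAverage f c R < circleAverage (fun _ ↦ M) c R := by
    simp only [circleAverage_def, smul_eq_mul]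
    exact mul_lt_mul_of_pos_left hlt (by positivity)
  rw [circleAverage_const] at this
  linarith

section MaximumPrinciple

variable {u : ℂ → ℝ} {G : Set ℂ} {M : ℝ}

lemma isOpen_setOf_eq_of_submeanAt (hG : IsOpen G) (hu : ContinuousOn u G)
    (hsub : ∀ z ∈ G, SubmeanAt u G z) (hle : ∀ z ∈ G, u z ≤ M) :
    IsOpen {z | z ∈ G ∧ u z = M} := by
  rw [Metric.isOpen_iff]
  rintro z ⟨hzG, hzM⟩
  obtain ⟨r, hr, hrG⟩ := Metric.isOpen_iff.1 hG z hzG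
  refine ⟨r, hr, fun w hw ↦ ?_⟩
  rcases eq_or_ne w z with rfl | hwz
  · exact ⟨hzG, hzM⟩
  set ρ := dist w z
  have hρ : 0 < ρ := dist_pos.2 hwz
  have hball : closedBall z ρ ⊆ G := (closedBall_subset_ball hw).trans hrG
  have hsphere : sphere z |ρ| ⊆ G := by
    rw [abs_of_pos hρ]; exact sphere_subset_closedBall.trans hball
  have hw' : w ∈ sphere z |ρ| := by rw [abs_of_pos hρ]; exact mem_sphere.2 rfl
  exact ⟨hsphere hw', eqOn_sphere_of_le_circleAverage (hu.mono hsphere)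
    (fun x hx ↦ hle x (hsphere hx)) (hzM ▸ hsub z hzG ρ hρ hball) w hw'⟩

lemma le_of_forall_frontier_le_of_submeanAt (hGb : Bornology.IsBounded G) (hG : IsOpen G)
    (hu : ContinuousOn u (closure G)) (hsub : ∀ z ∈ G, SubmeanAt u G z)
    (hM : ∀ z ∈ frontier G, u z ≤ M) : ∀ z ∈ closure G, u z ≤ M := by
  rcases G.eq_empty_or_nonempty with rfl | hne
  · simp
  obtain ⟨z₀, hz₀, hmax⟩ := hGb.isCompact_closure.exists_isMaxOn hne.closure hu
  suffices ∃ p ∈ frontier G, u p = u z₀ by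
    obtain ⟨p, hp, hpz₀⟩ := this
    exact fun z hz ↦ (hmax hz).trans (hpz₀ ▸ hM p hp)
  by_cases hz₀G : z₀ ∈ G
  swap
  · exact ⟨z₀, ⟨hz₀, by rwa [hG.interior_eq]⟩, rfl⟩
  -- a maximum inside `G` spreads over an open set, whose frontier reaches that of `G`
  set S := {z | z ∈ G ∧ u z = u z₀}
  have hS : IsOpen S := isOpen_setOf_eq_of_submeanAt hG (hu.mono subset_closure) hsub
    (fun z hz ↦ hmax (subset_closure hz))
  have hSuniv : S ≠ univ := fun h ↦
    NormedSpace.unbounded_univ ℂ ℂ (hGb.subset (h ▸ fun z hz ↦ hz.1))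
  obtain ⟨p, hp⟩ := nonempty_frontier_iff.2 ⟨(⟨z₀, hz₀G, rfl⟩ : S.Nonempty), hSuniv⟩
  have hcl : closure S ⊆ closure G ∩ u ⁻¹' {u z₀} :=
    closure_minimal (fun z hz ↦ ⟨subset_closure hz.1, hz.2⟩)
      (hu.preimage_isClosed_of_isClosed isClosed_closure isClosed_singleton)
  obtain ⟨hpG, hpu⟩ := hcl hp.1
  refine ⟨p, ⟨hpG, fun hpG' ↦ hp.2 ?_⟩, hpu⟩
  rw [hS.interior_eq]
  exact ⟨by rwa [hG.interior_eq] at hpG', hpu⟩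

lemma eqOn_of_submeanAt_of_eq (hG : IsOpen G) (hGc : IsPreconnected G)
    (hu : ContinuousOn u (closure G)) (hsub : ∀ z ∈ G, SubmeanAt u G z)
    (hle : ∀ z ∈ G, u z ≤ M) {z₀ : ℂ} (hz₀ : z₀ ∈ G) (hM : u z₀ = M) :
    ∀ z ∈ G, u z = M := by
  set S := {z | z ∈ G ∧ u z = M}
  have hS : IsOpen S := isOpen_setOf_eq_of_submeanAt hG (hu.mono subset_closure) hsub hle
  have hcl : closure S ⊆ closure G ∩ u ⁻¹' {M} :=
    closure_minimal (fun z hz ↦ ⟨subset_closure hz.1, hz.2⟩)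
      (hu.preimage_isClosed_of_isClosed isClosed_closure isClosed_singleton)
  intro z hz
  exact (hGc.subset_of_closure_inter_subset hS ⟨z₀, hz₀, hz₀, hM⟩
    (fun p hp ↦ ⟨hp.2, (hcl hp.1).2⟩) hz).2

end MaximumPrinciple

/-- Hopf's barrier: `u - ε log ‖·‖` is subharmonic on the annulus `1/2 < ‖z‖ < 1` and, for `ε`
chosen from the gap `M - max_{‖z‖ = 1/2} u`, at most `M` on both boundary circles. -/
lemma exists_le_add_mul_log_of_lt {u : ℂ → ℝ} {M : ℝ} (hu : ContinuousOn u (closedBall 0 1))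
    (hsub : ∀ z ∈ ball (0 : ℂ) 1, SubmeanAt u (ball 0 1) z)
    (hlt : ∀ z ∈ ball (0 : ℂ) 1, u z < M) (hle : ∀ z ∈ sphere (0 : ℂ) 1, u z ≤ M) :
    ∃ ε > 0, ∀ z : ℂ, 1 / 2 < ‖z‖ → ‖z‖ < 1 → u z ≤ M + ε * Real.log ‖z‖ := by
  obtain ⟨q, hq, hmax⟩ := (isCompact_sphere (0 : ℂ) (1 / 2)).exists_isMaxOn
    (NormedSpace.sphere_nonempty.2 (by norm_num))
    (hu.mono (sphere_subset_closedBall.trans (closedBall_subset_closedBall (by norm_num))))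
  have hqM : u q < M := hlt q (sphere_subset_ball (by norm_num) hq)
  set ε := (M - u q) / Real.log 2
  have hε : 0 < ε := div_pos (by linarith) (Real.log_pos one_lt_two)
  set G := ball (0 : ℂ) 1 \ closedBall 0 (1 / 2)
  have hG : IsOpen G := isOpen_ball.sdiff isClosed_closedBall
  have hGcl : closure G ⊆ closedBall 0 1 \ ball 0 (1 / 2) :=
    closure_minimal (sdiff_subset_sdiff ball_subset_closedBall ball_subset_closedBall)
      (isClosed_closedBall.sdiff isOpen_ball)
  have hG0 : ∀ z ∈ closure G, z ≠ 0 := by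
    rintro z hz rfl
    exact (hGcl hz).2 (mem_ball_self (by norm_num))
  have key : ∀ z ∈ closure G, u z - ε * Real.log ‖z‖ ≤ M := by
    refine le_of_forall_frontier_le_of_submeanAt (isBounded_ball.subset sdiff_subset) hG ?_ ?_ ?_
    · exact (hu.mono (hGcl.trans sdiff_subset)).sub (continuousOn_const.mul
        (continuous_norm.continuousOn.log fun z hz ↦ norm_ne_zero_iff.2 (hG0 z hz)))
    · exact fun z hz ↦ ((hsub z hz.1).mono sdiff_subset).sub_mul_log_norm
        (hu.mono (sdiff_subset.trans ball_subset_closedBall))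
        (fun h0 ↦ hG0 0 (subset_closure h0) rfl) ε
    · intro z hz
      have hzG : z ∉ G := by rw [frontier, hG.interior_eq] at hz; exact hz.2
      obtain ⟨h1, h2⟩ := hGcl (frontier_subset_closure hz)
      simp only [G, Set.mem_sdiff, mem_ball_zero_iff, mem_closedBall_zero_iff,
        not_lt, not_and, not_le] at h1 h2 hzG
      rcases h1.eq_or_lt with h | h
      · simpa [h] using hle z (mem_sphere_zero_iff_norm.2 h)
      · have hz2 : ‖z‖ = 1 / 2 := le_antisymm (hzG h) h2
        have huz : u z ≤ u q := hmax (mem_sphere_zero_iff_norm.2 hz2)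
        rw [hz2, one_div, Real.log_inv, mul_neg, div_mul_cancel₀ _ (Real.log_pos one_lt_two).ne']
        linarith
  refine ⟨ε, hε, fun z hz1 hz2 ↦ ?_⟩
  have := key z (subset_closure ⟨mem_ball_zero_iff.2 hz2, by simpa using hz1⟩)
  linarith

lemma le_fderiv_apply_of_le_add_mul_log {u : ℂ → ℝ} {L : ℂ →L[ℝ] ℝ} {p : ℂ} {ε : ℝ}
    (hu : HasFDerivAt u L p) (hp : ‖p‖ = 1)
    (hbound : ∀ z : ℂ, 1 / 2 < ‖z‖ → ‖z‖ < 1 → u z ≤ u p + ε * Real.log ‖z‖) : ε ≤ L p := by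
  set h : ℝ → ℝ := fun t ↦ u (t • p) - ε * Real.log t
  have hray : HasDerivAt (fun t : ℝ ↦ t • p) p 1 := by
    simpa using (hasDerivAt_id (1 : ℝ)).smul_const p
  have hderiv : HasDerivAt h (L p - ε) 1 := by
    have hlog := (Real.hasDerivAt_log one_ne_zero).const_mul ε
    simp only [inv_one, mul_one] at hlog
    have hu' : HasFDerivAt u L ((1 : ℝ) • p) := by rwa [one_smul]
    exact (hu'.comp_hasDerivAt 1 hray).sub hlog
  have hmax : IsLocalMaxOn h (Ioc (1 / 2) 1) 1 := by
    refine Filter.eventually_of_mem self_mem_nhdsWithin fun t ht ↦ ?_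
    rcases ht.2.eq_or_lt with rfl | ht1
    · exact le_rfl
    have hnorm : ‖t • p‖ = t := by
      rw [norm_smul, hp, mul_one, Real.norm_of_nonneg (one_half_pos.trans ht.1).le]
    have := hbound (t • p) (hnorm.symm ▸ ht.1) (hnorm.symm ▸ ht1)
    rw [hnorm] at this
    simp only [h, one_smul, Real.log_one, mul_zero, sub_zero]
    linarith
  have hcone : (-(1 / 4) : ℝ) ∈ posTangentConeAt (Ioc (1 / 2 : ℝ) 1) 1 := by
    refine mem_posTangentConeAt_of_segment_subset ?_
    rw [segment_eq_Icc']
    intro t ht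
    simp only [mem_Icc] at ht
    constructor <;> norm_num at ht ⊢ <;> linarith [ht.1, ht.2]
  have := hmax.hasFDerivWithinAt_nonpos hderiv.hasFDerivAt.hasFDerivWithinAt hcone
  rw [ContinuousLinearMap.toSpanSingleton_apply, smul_eq_mul] at this
  linarith

lemma HasStrictFDerivAt.apply_eq_zero_of_eventually_eq {E F ι : Type*}
    [NormedAddCommGroup E] [NormedSpace ℝ E] [NormedAddCommGroup F] [NormedSpace ℝ F]
    {f : E → F} {L : E →L[ℝ] F} {x d : E} (hf : HasStrictFDerivAt f L x)
    {l : Filter ι} [l.NeBot] {y w : ι → E} {c : ι → ℝ} (hy : Tendsto y l (𝓝 x))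
    (hc : Tendsto c l (𝓝[≠] 0)) (hw : Tendsto w l (𝓝 d))
    (heq : ∀ᶠ i in l, f (y i + c i • w i) = f (y i)) : L d = 0 := by
  have hcw : Tendsto (fun i ↦ c i • w i) l (𝓝 0) := by
    simpa using (hc.mono_right nhdsWithin_le_nhds).smul hw
  have hpair : Tendsto (fun i ↦ (y i + c i • w i, y i)) l (𝓝 (x, x)) :=
    (by simpa using hy.add hcw : Tendsto (fun i ↦ y i + c i • w i) l (𝓝 x)).prodMk_nhds hy
  have hlo : (fun i ↦ c i • L (w i)) =o[l] c := by
    have h : (fun i ↦ f (y i + c i • w i) - f (y i) - L (c i • w i)) =o[l] fun i ↦ c i • w i := by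
      simpa [Function.comp_def] using hf.isLittleO.comp_tendsto hpair
    refine (h.trans_isBigO ((isBigO_refl c l).smul (hw.isBigO_one ℝ))).neg_left.congr' ?_
      (.of_forall fun i ↦ by simp)
    filter_upwards [heq] with i hi
    simp [hi]
  have hLw : Tendsto (fun i ↦ L (w i)) l (𝓝 0) := by
    refine hlo.tendsto_inv_smul_nhds_zero.congr' ?_
    filter_upwards [eventually_mem_nhdsWithin.filter_mono hc] with i hi
    rw [smul_smul, inv_mul_cancel₀ hi, one_smul]
  exact tendsto_nhds_unique ((L.continuous.tendsto d).comp hw) hLw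

lemma mapClusterPt_atTop_of_preperfect {X : Type*} [TopologicalSpace X] [T1Space X]
    {θ : ℕ → X} {s : Set X} (hs : Preperfect s) (hsθ : s ⊆ closure (range θ)) {x : X}
    (hx : x ∈ s) : MapClusterPt x atTop θ := by
  rw [mapClusterPt_atTop_iff_forall_mem_closure]
  intro N
  by_contra hxN
  set O := (closure (θ '' Ici N))ᶜ
  have hhead : (θ '' Iio N).Finite := (finite_Iio N).image θ
  -- near `x`, the points of `s` could only come from the finitely many `θ n` with `n < N`
  have hfin : (O ∩ s).Finite := by
    refine hhead.subset fun z ⟨hzO, hzs⟩ ↦ ?_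
    have hz := hsθ hzs
    rw [← image_univ, ← Iio_union_Ici (a := N), image_union, closure_union,
      hhead.isClosed.closure_eq] at hz
    exact hz.resolve_right hzO
  exact Set.Infinite.of_accPt ((hs.open_inter isClosed_closure.isOpen_compl) x ⟨hxN, hx⟩) hfin

lemma exists_subseq_tendsto_exp_mul_I {θ : ℕ → ℝ}
    (hdense : Icc (0 : ℝ) (2 * π) ⊆ closure (range θ)) {p : ℂ} (hp : p ∈ sphere (0 : ℂ) 1) :
    ∃ ψ : ℕ → ℕ, Tendsto ψ atTop atTop ∧
      Tendsto (fun n ↦ Complex.exp (θ (ψ n) * I)) atTop (𝓝 p) := by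
  rw [← abs_one, ← image_circleMap_Ioc] at hp
  obtain ⟨φ, hφ, rfl⟩ := hp
  have hperf : Preperfect (Icc (0 : ℝ) (2 * π)) :=
    isPreconnected_Icc.preperfect_of_nontrivial
      ⟨0, left_mem_Icc.2 two_pi_pos.le, 2 * π, right_mem_Icc.2 two_pi_pos.le, two_pi_pos.ne⟩
  obtain ⟨ψ, hψ, hθψ⟩ :=
    (mapClusterPt_atTop_of_preperfect hperf hdense (Ioc_subset_Icc_self hφ)).tendsto_subseq
  refine ⟨ψ, hψ.tendsto_atTop, ?_⟩
  simpa [circleMap, Function.comp_def] using ((continuous_circleMap 0 1).tendsto φ).comp hθψ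

section Chords

variable {θ : ℕ → ℝ} (hdense : Icc (0 : ℝ) (2 * π) ⊆ closure (range θ)) {a : ℕ → ℂ}
  (ha : ∀ j : ℕ, a j = ((1 + ((j : ℝ) + 1)⁻¹ : ℝ) : ℂ) * Complex.exp ((θ j : ℂ) * I))
  {U : Set ℂ} {v : ℂ → ℝ} (hva : ∀ j : ℕ, a j ∈ U → v (a j) = 1)
include hdense ha hva

lemma exists_chords_eq_one {p : ℂ} (hp : p ∈ sphere (0 : ℂ) 1) (hU : U ∈ 𝓝 p) :
    ∃ (c : ℕ → ℝ) (q : ℕ → ℂ), Tendsto c atTop (𝓝[≠] 0) ∧ Tendsto q atTop (𝓝 p) ∧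
      (∀ n, q n ∈ sphere (0 : ℂ) 1) ∧ ∀ᶠ n in atTop, v (q n + c n • q n) = 1 := by
  obtain ⟨ψ, hψ, hq⟩ := exists_subseq_tendsto_exp_mul_I hdense hp
  set c : ℕ → ℝ := fun n ↦ ((ψ n : ℝ) + 1)⁻¹
  set q : ℕ → ℂ := fun n ↦ Complex.exp (θ (ψ n) * I)
  have hc : Tendsto c atTop (𝓝[>] 0) :=
    tendsto_inv_atTop_nhdsGT_zero.comp
      (tendsto_atTop_add_const_right _ 1 (tendsto_natCast_atTop_atTop.comp hψ))
  have hcq : ∀ n, a (ψ n) = q n + c n • q n := fun n ↦ by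
    simp only [ha, q, c, Complex.real_smul]; push_cast; ring
  have hlim : Tendsto (fun n ↦ a (ψ n)) atTop (𝓝 p) := by
    simpa [hcq] using hq.add ((hc.mono_right nhdsWithin_le_nhds).smul hq)
  refine ⟨c, q, hc.mono_right (nhdsWithin_mono _ fun t ht ↦ ne_of_gt ht), hq,
    fun n ↦ by simp [q, Complex.norm_exp], ?_⟩
  filter_upwards [hlim.eventually hU] with n hn
  rw [← hcq]
  exact hva _ hn

lemma eq_one_of_mem_sphere {p : ℂ} (hp : p ∈ sphere (0 : ℂ) 1) (hU : U ∈ 𝓝 p)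
    (hv : ContinuousAt v p) : v p = 1 := by
  obtain ⟨c, q, hc, hq, -, hvc⟩ := exists_chords_eq_one hdense ha hva hp hU
  have hlim : Tendsto (fun n ↦ q n + c n • q n) atTop (𝓝 p) := by
    simpa using hq.add ((hc.mono_right nhdsWithin_le_nhds).smul hq)
  exact tendsto_nhds_unique (hv.tendsto.comp hlim)
    (tendsto_const_nhds.congr' (hvc.mono fun n hn ↦ hn.symm))

lemma fderiv_apply_one_eq_zero {L : ℂ →L[ℝ] ℝ} (hv : HasStrictFDerivAt v L 1) (hU : U ∈ 𝓝 1)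
    (hbdry : ∀ p ∈ sphere (0 : ℂ) 1, v p = 1) : L 1 = 0 := by
  obtain ⟨c, q, hc, hq, hqs, hvc⟩ := exists_chords_eq_one hdense ha hva (by simp) hU
  exact hv.apply_eq_zero_of_eventually_eq hq hc hq
    (hvc.mono fun n hn ↦ hn.trans (hbdry _ (hqs n)).symm)

end Chords

theorem stmt_13 (θ : ℕ → ℝ) (hdense : Set.Icc (0:ℝ) (2 * Real.pi) ⊆ closure (Set.range θ))
    (a : ℕ → ℂ)
    (ha : ∀ j : ℕ, a j = ((1 + ((j : ℝ) + 1)⁻¹ : ℝ) : ℂ) * Complex.exp ((θ j : ℂ) * Complex.I))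
    (U : Set ℂ) (hU : IsOpen U) (hDU : closedBall (0:ℂ) 1 ⊆ U)
    (v : ℂ → ℝ) (hv1 : ContDiffOn ℝ 1 v U) (hvsub : SubharmonicOn v U)
    (hva : ∀ j : ℕ, a j ∈ U → v (a j) = 1) :
    ∀ z ∈ closedBall (0:ℂ) 1, v z = 1 := by
  have hnhds : ∀ p ∈ closedBall (0 : ℂ) 1, U ∈ 𝓝 p := fun p hp ↦ hU.mem_nhds (hDU hp)
  have hbdry : ∀ p ∈ sphere (0 : ℂ) 1, v p = 1 := fun p hp ↦
    have hpU := hnhds p (sphere_subset_closedBall hp)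
    eq_one_of_mem_sphere hdense ha hva hp hpU (hv1.continuousOn.continuousAt hpU)
  have hsub : ∀ z ∈ ball (0 : ℂ) 1, SubmeanAt v (ball 0 1) z := fun z hz ↦
    (hvsub.2 z (hDU (ball_subset_closedBall hz))).mono (ball_subset_closedBall.trans hDU)
  have hvB : ContinuousOn v (closure (ball (0 : ℂ) 1)) := by
    rw [closure_ball 0 one_ne_zero]; exact hv1.continuousOn.mono hDU
  have hle : ∀ z ∈ closedBall (0 : ℂ) 1, v z ≤ 1 := by
    rw [← closure_ball (0 : ℂ) one_ne_zero]
    exact le_of_forall_frontier_le_of_submeanAt isBounded_ball isOpen_ball hvB hsub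
      fun z hz ↦ (hbdry z (frontier_ball_subset_sphere hz)).le
  by_cases hint : ∃ z₀ ∈ ball (0 : ℂ) 1, v z₀ = 1
  · obtain ⟨z₀, hz₀, hvz₀⟩ := hint
    have hball := eqOn_of_submeanAt_of_eq isOpen_ball (convex_ball (0 : ℂ) 1).isPreconnected hvB
      hsub (fun z hz ↦ hle z (ball_subset_closedBall hz)) hz₀ hvz₀
    rw [← ball_union_sphere]
    rintro z (hz | hz)
    exacts [hball z hz, hbdry z hz]
  push Not at hint
  obtain ⟨ε, hε, hhopf⟩ := exists_le_add_mul_log_of_lt (hv1.continuousOn.mono hDU) hsub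
    (fun z hz ↦ (hle z (ball_subset_closedBall hz)).lt_of_ne (hint z hz))
    (fun z hz ↦ (hbdry z hz).le)
  have h1 : (1 : ℂ) ∈ sphere 0 1 := by simp
  have hstrict : HasStrictFDerivAt v (fderiv ℝ v 1) 1 :=
    (hv1.contDiffAt (hnhds 1 (sphere_subset_closedBall h1))).hasStrictFDerivAt one_ne_zero
  have hpos : ε ≤ fderiv ℝ v 1 1 :=
    le_fderiv_apply_of_le_add_mul_log hstrict.hasFDerivAt norm_one (by rwa [hbdry 1 h1])
  linarith [fderiv_apply_one_eq_zero hdense ha hva hstrict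
    (hnhds 1 (sphere_subset_closedBall h1)) hbdry]
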